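/- arXiv:2011.08448 — 3 statements merged into one kernel-verified Lean document; each statement's English description precedes it below -/
import Mathlib

section
/- Let G = (V,E) be a graph and (A, V\A) a cut of neighbourhood diversity at most k with module partition A_1,…,A_k of A and B_i = N_G(A_i) \ A. Then for every u,v ∉ A, d_G(u,v) = min( d_{G[V\A]}(u,v), min over 1 ≤ i ≤ k of (d_G(u,A_i) + 1 + d_G(B_i,v)) ). -/
/-
A shortest `u`–`v` walk either stays outside `A`, and then lives in `G[V \ A]`, or it meets `A`;
in the latter case, cut it at the last edge `a b` leaving `A` before `v`. If `a ∈ A_i`, then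
`b ∈ B_i`, so the walk is at least `d(u, A_i) + 1 + d(B_i, v)` long. Conversely, since `A_i` is a
module relative to `V \ A`, every vertex of `A_i` is adjacent to every vertex of `B_i`, so each
term of the minimum is realised by a walk.
-/

open scoped Classical

/-- `setEDist G u S` is the distance in `G` from the vertex `u` to the set `S`,
namely `min_{s ∈ S} d_G(u,s)`, with value `⊤` (i.e. `+∞`) when `S = ∅`. -/
noncomputable def setEDist {V : Type*} (G : SimpleGraph V) (u : V) (S : Set V) : ℕ∞ :=
  ⨅ s ∈ S, G.edist u s

namespace SimpleGraph

variable {V W : Type*} {G : SimpleGraph V}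

lemma edist_map_le {G' : SimpleGraph W} (f : G →g G') (u v : V) :
    G'.edist (f u) (f v) ≤ G.edist u v :=
  le_iInf fun p => (edist_le (p.map f)).trans_eq (by rw [Walk.length_map])

lemma Walk.length_induce (s : Set V) {u v : V} (p : G.Walk u v)
    (hp : ∀ x ∈ p.support, x ∈ s) : (p.induce s hp).length = p.length := by
  induction p with
  | nil => rfl
  | cons h q ih => simp [ih]

lemma setEDist_le {u s : V} {S : Set V} (hs : s ∈ S) : setEDist G u S ≤ G.edist u s :=
  iInf₂_le s hs

lemma edist_le_setEDist_add_one_add_setEDist {S T : Set V}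
    (hST : ∀ a ∈ S, ∀ b ∈ T, G.Adj a b) (u v : V) :
    G.edist u v ≤ setEDist G u S + 1 + setEDist G v T := by
  rw [setEDist, setEDist, ENat.iInf₂_add]
  refine ENat.le_iInf₂_add_iInf₂ fun a ha b hb => ?_
  calc G.edist u v ≤ G.edist u a + G.edist a b + G.edist b v :=
        G.edist_triangle.trans (add_le_add_left G.edist_triangle _)
    _ = G.edist u a + 1 + G.edist v b := by
        rw [edist_eq_one_iff_adj.2 (hST a ha b hb), edist_comm (u := b)]

/-- The walk is split at its last edge from `A` to `Aᶜ`. -/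
lemma Walk.exists_adj_mem_not_mem_edist_le {A : Set V} {x v : V} (p : G.Walk x v) (hv : v ∉ A)
    (hpA : ∃ z ∈ p.support, z ∈ A) :
    ∃ a b, a ∈ A ∧ b ∉ A ∧ G.Adj a b ∧ G.edist x a + 1 + G.edist b v ≤ p.length := by
  induction p with
  | nil =>
    obtain ⟨z, hz, hzA⟩ := hpA
    rw [support_nil, List.mem_singleton] at hz
    exact absurd (hz ▸ hzA) hv
  | @cons x w v hxw q ih =>
    rw [length_cons, Nat.cast_succ]
    by_cases hqA : ∃ z ∈ q.support, z ∈ A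
    · obtain ⟨a, b, ha, hb, hab, hle⟩ := ih hv hqA
      refine ⟨a, b, ha, hb, hab, ?_⟩
      calc G.edist x a + 1 + G.edist b v ≤ G.edist x w + G.edist w a + 1 + G.edist b v := by
            gcongr; exact G.edist_triangle
        _ = G.edist w a + 1 + G.edist b v + 1 := by
            rw [edist_eq_one_iff_adj.2 hxw]; ring
        _ ≤ q.length + 1 := by gcongr
    · obtain ⟨z, hz, hzA⟩ := hpA
      have hx : x ∈ A := by
        rcases List.mem_cons.1 (support_cons hxw q ▸ hz) with rfl | hz
        · exact hzA
        · exact absurd ⟨z, hz, hzA⟩ hqA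
      refine ⟨x, w, hx, fun hw => hqA ⟨w, q.start_mem_support, hw⟩, hxw, ?_⟩
      rw [edist_self, zero_add, add_comm]
      gcongr
      exact edist_le q

end SimpleGraph

open SimpleGraph in
theorem dist_formula_outside_general {V : Type*} (G : SimpleGraph V)
    (A : Set V) (k : ℕ) (Apart : Fin k → Set V)
    (hcover : (⋃ i, Apart i) = A)
    (hmod : ∀ i, ∀ u ∈ Apart i, ∀ v ∈ Apart i, ∀ x ∉ A, (G.Adj u x ↔ G.Adj v x))
    (B : Fin k → Set V) (hB : ∀ i, B i = {x | x ∉ A ∧ ∃ a ∈ Apart i, G.Adj a x})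
    (u v : V) (hu : u ∉ A) (hv : v ∉ A) :
    G.edist u v =
      min ((G.induce Aᶜ).edist ⟨u, hu⟩ ⟨v, hv⟩)
        (⨅ i : Fin k, (setEDist G u (Apart i) + 1 + setEDist G v (B i))) := by
  have hadj : ∀ i, ∀ a ∈ Apart i, ∀ b ∈ B i, G.Adj a b := by
    rintro i a ha b hb
    obtain ⟨hbA, a', ha', ha'b⟩ := hB i ▸ hb
    exact (hmod i a ha a' ha' b hbA).2 ha'b
  refine le_antisymm (le_min (edist_map_le (Embedding.induce Aᶜ).toHom _ _)
    (le_iInf fun i => edist_le_setEDist_add_one_add_setEDist (hadj i) u v)) (le_iInf fun p => ?_)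
  by_cases hpA : ∀ z ∈ p.support, z ∈ Aᶜ
  · exact (min_le_left _ _).trans
      ((edist_le (p.induce Aᶜ hpA)).trans_eq (by rw [p.length_induce]))
  simp only [Set.mem_compl_iff, not_forall, not_not, exists_prop] at hpA
  obtain ⟨a, b, ha, hb, hab, hle⟩ := p.exists_adj_mem_not_mem_edist_le hv hpA
  obtain ⟨i, hai⟩ := Set.mem_iUnion.1 (hcover ▸ ha)
  have hbi : b ∈ B i := hB i ▸ ⟨hb, a, hai, hab⟩
  calc _ ≤ setEDist G u (Apart i) + 1 + setEDist G v (B i) :=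
        (min_le_right _ _).trans (iInf_le _ i)
    _ ≤ G.edist u a + 1 + G.edist b v := by
        rw [edist_comm (u := b)]; gcongr <;> exact setEDist_le ‹_›
    _ ≤ p.length := hle

/-- **Lemma 3.2, third case.** Let `(A, V \ A)` be a cut of neighbourhood diversity at
most `k`, with module partition `A_1, …, A_k` of `A` and `B_i = N_G(A_i) \ A`.  Then for
all `u, v ∉ A`,
`d_G(u,v) = min( d_{G[V \ A]}(u,v), min_{1 ≤ i ≤ k} (d_G(u,A_i) + 1 + d_G(B_i,v)) )`. -/
theorem dist_formula_outside {V : Type*} [Fintype V] (G : SimpleGraph V)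
    (A : Set V) (k : ℕ) (Apart : Fin k → Set V)
    (hcover : (⋃ i, Apart i) = A)
    (hdisj : ∀ i j, i ≠ j → Disjoint (Apart i) (Apart j))
    (hmod : ∀ i, ∀ u ∈ Apart i, ∀ v ∈ Apart i, ∀ x ∉ A, (G.Adj u x ↔ G.Adj v x))
    (B : Fin k → Set V) (hB : ∀ i, B i = {x | x ∉ A ∧ ∃ a ∈ Apart i, G.Adj a x})
    (u v : V) (hu : u ∉ A) (hv : v ∉ A) :
    G.edist u v =
      min ((G.induce Aᶜ).edist ⟨u, hu⟩ ⟨v, hv⟩)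
        (⨅ i : Fin k, (setEDist G u (Apart i) + 1 + setEDist G v (B i))) :=
  dist_formula_outside_general G A k Apart hcover hmod B hB u v hu hv
end

section
/- Let (T,f) be a partition tree of a graph G = (V,E), and let a_1,…,a_p be children of some node a' in T, with A_i = ⋃ f(a_i) and A = ⋃_{i=1}^p A_i. Then A is a |f(a')|-module of G, with corresponding module partition { X' ∩ A : X' ∈ f(a'), X' ∩ A ≠ ∅ }. -/
/-!
Let `u, v` share the part `X'` of `f(a')` and lie under children of `a'`, and let `x` be outside
`A` with `u ~ x`. Climbing from the child containing `u` towards the root, there is a first node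
`c` whose support misses `x` while the support of its parent contains it; so `x` lies under a
sibling of `c`. Parts are only coarsened on the way up, so `u` and `v` still share a part of
`f(par c)`, and compatibility at `par c` turns the edge `u x` into a complete join between that
part and the part of `x`; in particular `v ~ x`.
-/

open scoped Classical

/-- A partition tree `(T, f)` of a graph `G` (Courcelle–Heggernes–et al.): a rooted tree
(given by a parent function `par` with root `root`) whose inner nodes have at least two
children, together with a map `f` assigning to each node a partition of a vertex-subset
of `G` (the node's *support* is `⋃₀ f a`), such that: every leaf carries a singleton
`{{v}}` and every vertex occurs at some leaf; the supports of the children of an inner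
node are pairwise disjoint and their union is the node's support; the union of the
children's partitions refines the node's partition; and the node's partition is
compatible with the edges between different children: adjacent vertices lying under
different children belong to distinct parts `X ≠ Y` of the node's partition, with a
complete join `X × Y ⊆ E`. -/
structure PartitionTree {V : Type*} (G : SimpleGraph V) where
  N : Type
  [instFin : Fintype N]
  root : N
  par : N → N
  par_root : par root = root
  reach_root : ∀ a : N, ∃ n : ℕ, par^[n] a = root
  f : N → Set (Set V)
  parts_nonempty : ∀ a : N, ∀ X ∈ f a, X.Nonempty
  parts_disjoint : ∀ a : N, (f a).PairwiseDisjoint id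
  leaf_singleton : ∀ a : N, (∀ b, par b = a → b = a) → ∃ v : V, f a = {{v}}
  vertex_leaf : ∀ v : V, ∃ a : N, f a = {{v}}
  inner_two_children : ∀ a : N, (∃ b, b ≠ a ∧ par b = a) →
    ∃ b c, b ≠ c ∧ b ≠ a ∧ c ≠ a ∧ par b = a ∧ par c = a
  children_disjoint : ∀ b c : N, b ≠ c → par b = par c → b ≠ par b → c ≠ par c →
    Disjoint (⋃₀ f b) (⋃₀ f c)
  support_eq : ∀ a : N, (∃ b, b ≠ a ∧ par b = a) →
    ⋃₀ f a = ⋃ b ∈ {b : N | b ≠ a ∧ par b = a}, ⋃₀ f b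
  refines : ∀ b : N, b ≠ par b → ∀ X ∈ f b, ∃ Y ∈ f (par b), X ⊆ Y
  compatible : ∀ b c : N, b ≠ c → b ≠ par b → c ≠ par c → par b = par c →
    ∀ u ∈ ⋃₀ f b, ∀ v ∈ ⋃₀ f c, G.Adj u v →
      ∀ X ∈ f (par b), ∀ Y ∈ f (par b), u ∈ X → v ∈ Y →
        X ≠ Y ∧ ∀ x ∈ X, ∀ y ∈ Y, G.Adj x y

namespace PartitionTree

variable {V : Type*} {G : SimpleGraph V} (T : PartitionTree G)

def support (a : T.N) : Set V := ⋃₀ T.f a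

lemma exists_part_par_superset {a : T.N} {X : Set V} (hX : X ∈ T.f a) :
    ∃ Y ∈ T.f (T.par a), X ⊆ Y := by
  by_cases h : a = T.par a
  · exact ⟨X, h ▸ hX, subset_rfl⟩
  · exact T.refines a h X hX

lemma exists_part_iterate_par_superset {a : T.N} {X : Set V} (hX : X ∈ T.f a) (k : ℕ) :
    ∃ Y ∈ T.f (T.par^[k] a), X ⊆ Y := by
  induction k with
  | zero => exact ⟨X, hX, subset_rfl⟩
  | succ k ih =>
    obtain ⟨Y, hY, hXY⟩ := ih
    obtain ⟨Z, hZ, hYZ⟩ := T.exists_part_par_superset hY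
    exact ⟨Z, (Function.iterate_succ_apply' T.par k a).symm ▸ hZ, hXY.trans hYZ⟩

lemma support_subset_iterate_par (a : T.N) (k : ℕ) : T.support a ⊆ T.support (T.par^[k] a) := by
  rintro u ⟨X, hX, hu⟩
  obtain ⟨Y, hY, hXY⟩ := T.exists_part_iterate_par_superset hX k
  exact ⟨Y, hY, hXY hu⟩

lemma mem_support_root (v : V) : v ∈ T.support T.root := by
  obtain ⟨a, ha⟩ := T.vertex_leaf v
  obtain ⟨n, hn⟩ := T.reach_root a
  exact hn ▸ T.support_subset_iterate_par a n ⟨{v}, ha ▸ rfl, rfl⟩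

lemma exists_iterate_par_notMem_support_and_mem_support_par {a : T.N} {x : V}
    (hx : x ∉ T.support a) :
    ∃ k, x ∉ T.support (T.par^[k] a) ∧ x ∈ T.support (T.par (T.par^[k] a)) := by
  by_contra! h
  have hnot : ∀ n, x ∉ T.support (T.par^[n] a) := by
    intro n
    induction n with
    | zero => exact hx
    | succ n ih => exact Function.iterate_succ_apply' T.par n a ▸ h n ih
  obtain ⟨n, hn⟩ := T.reach_root a
  exact hnot n (hn ▸ T.mem_support_root x)

lemma adj_of_mem_part_of_adj_leaving_child {c : T.N} {Z : Set V} (hZ : Z ∈ T.f (T.par c))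
    {u v x : V} (huZ : u ∈ Z) (hvZ : v ∈ Z) (hu : u ∈ T.support c)
    (hxc : x ∉ T.support c) (hxpc : x ∈ T.support (T.par c)) (hux : G.Adj u x) :
    G.Adj v x := by
  have hc : c ≠ T.par c := fun h => hxc (h ▸ hxpc)
  rw [support, T.support_eq (T.par c) ⟨c, hc, rfl⟩] at hxpc
  obtain ⟨e, ⟨he, hpe⟩, hxe⟩ := Set.mem_iUnion₂.mp hxpc
  have hce : c ≠ e := by rintro rfl; exact hxc hxe
  obtain ⟨Yx, hYx, hxYx⟩ := hxe
  obtain ⟨Y, hY, hYxY⟩ := T.exists_part_par_superset hYx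
  rw [hpe] at hY
  exact (T.compatible c e hce hc (hpe ▸ he) hpe.symm u hu x ⟨Yx, hYx, hxYx⟩ hux
    Z hZ Y hY huZ (hYxY hxYx)).2 v hvZ x (hYxY hxYx)

lemma adj_of_mem_part_par_of_adj {b : T.N} {X : Set V} (hX : X ∈ T.f (T.par b))
    {u v x : V} (huX : u ∈ X) (hvX : v ∈ X) (hu : u ∈ T.support b)
    (hx : x ∉ T.support b) (hux : G.Adj u x) : G.Adj v x := by
  obtain ⟨k, hxc, hxpc⟩ := T.exists_iterate_par_notMem_support_and_mem_support_par hx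
  obtain ⟨Z, hZ, hXZ⟩ := T.exists_part_iterate_par_superset hX k
  rw [Function.Commute.iterate_self T.par k b] at hZ
  exact T.adj_of_mem_part_of_adj_leaving_child hZ (hXZ huX) (hXZ hvX)
    (T.support_subset_iterate_par b k hu) hxc hxpc hux

end PartitionTree

theorem partitionTree_children_union_is_module_general {V : Type*} (G : SimpleGraph V)
    (T : PartitionTree G) (a' : T.N) (S : Set T.N)
    (hS : ∀ b ∈ S, b ≠ a' ∧ T.par b = a') :
    (∀ u ∈ ⋃ b ∈ S, ⋃₀ T.f b, ∃ X' ∈ T.f a', u ∈ X') ∧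
      ∀ X' ∈ T.f a',
        ∀ u ∈ X' ∩ ⋃ b ∈ S, ⋃₀ T.f b, ∀ v ∈ X' ∩ ⋃ b ∈ S, ⋃₀ T.f b,
          ∀ x ∉ ⋃ b ∈ S, ⋃₀ T.f b, (G.Adj u x ↔ G.Adj v x) := by
  have hpar : ∀ b ∈ S, T.par b = a' := fun b hb => (hS b hb).2
  have transfer : ∀ X' ∈ T.f a', ∀ u ∈ X' ∩ ⋃ b ∈ S, ⋃₀ T.f b, ∀ v ∈ X',
      ∀ x ∉ ⋃ b ∈ S, ⋃₀ T.f b, G.Adj u x → G.Adj v x := by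
    rintro X' hX' u ⟨huX', hu⟩ v hvX' x hx hux
    obtain ⟨b, hb, hub⟩ := Set.mem_iUnion₂.mp hu
    exact T.adj_of_mem_part_par_of_adj (hpar b hb ▸ hX') huX' hvX' hub
      (fun hxb => hx (Set.mem_biUnion hb hxb)) hux
  refine ⟨fun u hu => ?_, fun X' hX' u hu v hv x hx =>
    ⟨transfer X' hX' u hu v hv.1 x hx, transfer X' hX' v hv u hu.1 x hx⟩⟩
  obtain ⟨b, hb, X, hX, huX⟩ := Set.mem_iUnion₂.mp hu
  obtain ⟨Y, hY, hXY⟩ := T.exists_part_par_superset hX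
  exact ⟨Y, hpar b hb ▸ hY, hXY huX⟩

/-- **Lemma 2.2 (2).** Let `a_1, …, a_p` be children of a node `a'` of a partition tree
`(T, f)` of `G`, with `A_i = ⋃ f(a_i)` and `A = ⋃_{i=1}^p A_i`.  Then `A` is an
`|f(a')|`-module of `G`, a corresponding module partition being the family of nonempty
intersections `X' ∩ A` for `X' ∈ f(a')`: every vertex of `A` lies in some `X' ∈ f(a')`,
and within each `X' ∩ A` all vertices have the same neighbours outside `A`. -/
theorem partitionTree_children_union_is_module {V : Type*} [Fintype V] (G : SimpleGraph V)
    (T : PartitionTree G) (a' : T.N) (S : Set T.N)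
    (hS : ∀ b ∈ S, b ≠ a' ∧ T.par b = a') :
    (∀ u ∈ ⋃ b ∈ S, ⋃₀ T.f b, ∃ X' ∈ T.f a', u ∈ X') ∧
      ∀ X' ∈ T.f a',
        ∀ u ∈ X' ∩ ⋃ b ∈ S, ⋃₀ T.f b, ∀ v ∈ X' ∩ ⋃ b ∈ S, ⋃₀ T.f b,
          ∀ x ∉ ⋃ b ∈ S, ⋃₀ T.f b, (G.Adj u x ↔ G.Adj v x) :=
  partitionTree_children_union_is_module_general G T a' S hS
end

section
/- Let G = (V,E,w) be a connected edge-weighted graph and (A, V\A) an unweighted cut of neighbourhood diversity at most k, with minimal partition A_1,…,A_k of A and B_i = N_G(A_i)\A. Let H_B be obtained from G \ A by adding fresh vertices a_{ij} (1 ≤ i,j ≤ k), joining each a_{ij} to all of B_i with unit-weight edges, and adding for i < j an edge a_{ij}a_{ji} of weight d_G(A_i,A_j). Then for all u,v ∈ V \ A, d_G(u,v) = d_{H_B}(u,v). -/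
open scoped Classical

variable {V : Type*}

/-- The weight of a walk: the sum of the edge weights `w` along its darts. -/
def walkWeight (w : V → V → ℕ) {G : SimpleGraph V} {u v : V} (p : G.Walk u v) : ℕ :=
  (p.darts.map fun d => w d.toProd.1 d.toProd.2).sum

/-- Weighted shortest-path distance (`⊤` if there is no walk). -/
noncomputable def wdist (G : SimpleGraph V) (w : V → V → ℕ) (u v : V) : ℕ∞ :=
  ⨅ p : G.Walk u v, (walkWeight w p : ℕ∞)

/-- Weighted distance between two vertex sets: `min_{s∈S, t∈T} d(s,t)`. -/
noncomputable def wSetDist (G : SimpleGraph V) (w : V → V → ℕ) (S T : Set V) : ℕ∞ :=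
  ⨅ s ∈ S, ⨅ t ∈ T, wdist G w s t

/-- The underlying relation of the gadget graph `H_B` (Definition 4.2): on `G \ A`
(the vertices of `A` are kept as isolated junk vertices) we add fresh vertices
`a_{ij} = inr (i,j)` for the parts `A_i` with `B_i ≠ ∅`; each `a_{ij}` is joined to all
of `B_i`, and `a_{ij}` is joined to `a_{ji}` for `i ≠ j`. -/
def gadgetRelB {k : ℕ} (G : SimpleGraph V) (A : Set V) (B : Fin k → Set V) :
    (V ⊕ Fin k × Fin k) → (V ⊕ Fin k × Fin k) → Prop
  | Sum.inl u, Sum.inl v => u ∉ A ∧ v ∉ A ∧ G.Adj u v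
  | Sum.inl u, Sum.inr (i, _) => u ∈ B i
  | Sum.inr (i, j), Sum.inr (i', j') =>
      i' = j ∧ j' = i ∧ i ≠ j ∧ (B i).Nonempty ∧ (B j).Nonempty
  | _, _ => False

/-- The gadget graph `H_B` of Definition 4.2. -/
def gadgetB {k : ℕ} (G : SimpleGraph V) (A : Set V) (B : Fin k → Set V) :
    SimpleGraph (V ⊕ Fin k × Fin k) :=
  SimpleGraph.fromRel (gadgetRelB G A B)

/-- The edge weights of `H_B`: weights of `G` outside `A`, unit weights between `B_i` and
`a_{ij}`, and weight `d_G(A_i, A_j)` on the matching edge `a_{ij} a_{ji}`. -/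
noncomputable def gadgetWeightB {k : ℕ} (G : SimpleGraph V) (w : V → V → ℕ)
    (Apart : Fin k → Set V) : (V ⊕ Fin k × Fin k) → (V ⊕ Fin k × Fin k) → ℕ
  | Sum.inl u, Sum.inl v => w u v
  | Sum.inr (i, _), Sum.inr (i', _) => (wSetDist G w (Apart i) (Apart i')).toNat
  | _, _ => 1

/-!
Both inequalities come from one potential argument: if `φ x ≤ w x y + φ y` along every edge,
then `φ u ≤ d(u, v) + φ v`.

For `d_G ≤ d_{H_B}`, extend `x ↦ d_G(x, v)` to the gadget vertex `a_{ij}` by the cheaper of its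
two ways out: straight into `B_i`, or across the matching edge into `B_j`. This is a potential on
`H_B` because `A_i` and `B_i` form a complete join with unit weights, so going from `B_i` to `B_j`
through `A_i` and `A_j` costs at most `d_G(A_i, A_j) + 2` in `G`, just as it does in `H_B`.

For `d_{H_B} ≤ d_G`, extend `x ↦ d_{H_B}(x, v)` to `x ∈ A` by the cheapest way of leaving `A`,
into some `B_j` from some vertex of `A_j`. A `G`-walk that enters `A` in `A_i` and leaves it from
`A_j` is thereby replaced by the detour through `a_{ij}` and `a_{ji}`.
-/

section WeightedDistance

variable {G : SimpleGraph V} {w : V → V → ℕ}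

@[simp]
lemma walkWeight_nil {u : V} : walkWeight w (SimpleGraph.Walk.nil : G.Walk u u) = 0 := rfl

@[simp]
lemma walkWeight_cons {u x v : V} (h : G.Adj u x) (p : G.Walk x v) :
    walkWeight w (.cons h p) = w u x + walkWeight w p := by
  simp [walkWeight]

lemma wdist_le_walkWeight {u v : V} (p : G.Walk u v) : wdist G w u v ≤ walkWeight w p :=
  iInf_le _ p

lemma wdist_self (u : V) : wdist G w u u = 0 :=
  nonpos_iff_eq_zero.mp (wdist_le_walkWeight .nil)

lemma wdist_le_add_wdist_of_adj {x y z : V} (h : G.Adj x y) :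
    wdist G w x z ≤ w x y + wdist G w y z := by
  rw [wdist, wdist, ENat.add_iInf]
  exact le_iInf fun p => (wdist_le_walkWeight (p.cons h)).trans_eq (by simp)

lemma wdist_le_of_adj {x y : V} (h : G.Adj x y) : wdist G w x y ≤ w x y := by
  simpa [wdist_self] using wdist_le_add_wdist_of_adj (w := w) (z := y) h

lemma le_walkWeight_add_of_forall_adj_le (φ : V → ℕ∞)
    (hφ : ∀ x y, G.Adj x y → φ x ≤ w x y + φ y) {u v : V} (p : G.Walk u v) :
    φ u ≤ walkWeight w p + φ v := by
  induction p with
  | nil => simp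
  | cons h p ih =>
    calc φ _ ≤ w _ _ + φ _ := hφ _ _ h
      _ ≤ w _ _ + (walkWeight w p + φ _) := by gcongr
      _ = _ := by rw [walkWeight_cons]; push_cast; ring

lemma le_wdist_add_of_forall_adj_le (φ : V → ℕ∞)
    (hφ : ∀ x y, G.Adj x y → φ x ≤ w x y + φ y) (u v : V) :
    φ u ≤ wdist G w u v + φ v := by
  rw [wdist, ENat.iInf_add]
  exact le_iInf (le_walkWeight_add_of_forall_adj_le φ hφ)

lemma wdist_triangle (x y z : V) : wdist G w x z ≤ wdist G w x y + wdist G w y z :=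
  le_wdist_add_of_forall_adj_le (wdist G w · z) (fun _ _ => wdist_le_add_wdist_of_adj) x y

lemma wSetDist_le_wdist {S T : Set V} {s t : V} (hs : s ∈ S) (ht : t ∈ T) :
    wSetDist G w S T ≤ wdist G w s t :=
  iInf₂_le_of_le s hs (iInf₂_le t ht)

lemma wSetDist_self {S : Set V} (hS : S.Nonempty) : wSetDist G w S S = 0 := by
  obtain ⟨s, hs⟩ := hS
  simpa [wdist_self] using wSetDist_le_wdist (G := G) (w := w) hs hs

lemma wSetDist_ne_top (hG : G.Connected) {S T : Set V} (hS : S.Nonempty) (hT : T.Nonempty) :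
    wSetDist G w S T ≠ ⊤ := by
  obtain ⟨s, hs⟩ := hS
  obtain ⟨t, ht⟩ := hT
  obtain ⟨p⟩ := hG.preconnected s t
  exact ne_top_of_le_ne_top (by simp) ((wSetDist_le_wdist hs ht).trans (wdist_le_walkWeight p))

end WeightedDistance

def IsUnitJoin (G : SimpleGraph V) (w : V → V → ℕ) (S T : Set V) : Prop :=
  ∀ a ∈ S, ∀ x ∈ T, G.Adj a x ∧ w a x = 1 ∧ w x a = 1

lemma wdist_le_wSetDist_add_two {G : SimpleGraph V} {w : V → V → ℕ} {S T X Y : Set V}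
    (hS : IsUnitJoin G w S X) (hT : IsUnitJoin G w T Y) {x y : V} (hx : x ∈ X) (hy : y ∈ Y) :
    wdist G w x y ≤ wSetDist G w S T + 2 := by
  simp only [wSetDist, ENat.iInf_add]
  refine le_iInf₂ fun a ha => le_iInf₂ fun a' ha' => ?_
  obtain ⟨hax, -, hxa⟩ := hS a ha x hx
  obtain ⟨hay, hay1, -⟩ := hT a' ha' y hy
  calc wdist G w x y ≤ w x a + wdist G w a y := wdist_le_add_wdist_of_adj hax.symm
    _ ≤ w x a + (wdist G w a a' + wdist G w a' y) := by gcongr; exact wdist_triangle _ _ _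
    _ ≤ w x a + (wdist G w a a' + w a' y) := by gcongr; exact wdist_le_of_adj hay
    _ = wdist G w a a' + 2 := by rw [hxa, hay1]; push_cast; ring

section Gadget

variable {k : ℕ} {G : SimpleGraph V} {w : V → V → ℕ} {A : Set V} {Apart B : Fin k → Set V}

@[simp]
lemma gadgetB_adj_inl_inl {u v : V} :
    (gadgetB G A B).Adj (.inl u) (.inl v) ↔ u ∉ A ∧ v ∉ A ∧ G.Adj u v := by
  simp only [gadgetB, SimpleGraph.fromRel_adj, gadgetRelB, ne_eq, Sum.inl.injEq]
  constructor
  · rintro ⟨-, h | ⟨hv, hu, h⟩⟩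
    exacts [h, ⟨hu, hv, h.symm⟩]
  · rintro ⟨hu, hv, h⟩
    exact ⟨h.ne, .inl ⟨hu, hv, h⟩⟩

@[simp]
lemma gadgetB_adj_inl_inr {u : V} {i j : Fin k} :
    (gadgetB G A B).Adj (.inl u) (.inr (i, j)) ↔ u ∈ B i := by
  simp [gadgetB, gadgetRelB]

@[simp]
lemma gadgetB_adj_inr_inl {u : V} {i j : Fin k} :
    (gadgetB G A B).Adj (.inr (i, j)) (.inl u) ↔ u ∈ B i := by
  rw [SimpleGraph.adj_comm, gadgetB_adj_inl_inr]

@[simp]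
lemma gadgetB_adj_inr_inr {i j i' j' : Fin k} :
    (gadgetB G A B).Adj (.inr (i, j)) (.inr (i', j')) ↔
      i' = j ∧ j' = i ∧ i ≠ j ∧ (B i).Nonempty ∧ (B j).Nonempty := by
  simp only [gadgetB, SimpleGraph.fromRel_adj, gadgetRelB]
  aesop

lemma isUnitJoin_of_unweighted_cut (hwsym : ∀ u v, w u v = w v u) (hcover : (⋃ i, Apart i) = A)
    (hmod : ∀ i, ∀ u ∈ Apart i, ∀ v ∈ Apart i, ∀ x ∉ A, (G.Adj u x ↔ G.Adj v x))
    (hB : ∀ i, B i = {x | x ∉ A ∧ ∃ a ∈ Apart i, G.Adj a x})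
    (hcut : ∀ a ∈ A, ∀ b, b ∉ A → G.Adj a b → w a b = 1) (i : Fin k) :
    IsUnitJoin G w (Apart i) (B i) := by
  intro a ha x hx
  obtain ⟨hxA, a₀, ha₀, h₀⟩ : x ∉ A ∧ ∃ a ∈ Apart i, G.Adj a x := by rwa [hB] at hx
  have hadj : G.Adj a x := (hmod i a₀ ha₀ a ha x hxA).mp h₀
  have hw : w a x = 1 := hcut a (hcover ▸ Set.mem_iUnion_of_mem i ha) x hxA hadj
  exact ⟨hadj, hw, (hwsym x a).trans hw⟩

lemma gadgetB_wdist_le {i j : Fin k} {x y : V} (hx : x ∈ B i) (hy : y ∈ B j) :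
    wdist (gadgetB G A B) (gadgetWeightB G w Apart) (.inl x) (.inl y) ≤
      (wSetDist G w (Apart i) (Apart j)).toNat + 2 := by
  by_cases hij : i = j
  · subst hij
    let p : (gadgetB G A B).Walk (.inl x) (.inl y) :=
      .cons ((gadgetB_adj_inl_inr (j := i)).mpr hx) (.cons (gadgetB_adj_inr_inl.mpr hy) .nil)
    refine (wdist_le_walkWeight p).trans ?_
    simp [p, gadgetWeightB]
  · let p : (gadgetB G A B).Walk (.inl x) (.inl y) :=
      .cons ((gadgetB_adj_inl_inr (j := j)).mpr hx)
        (.cons (gadgetB_adj_inr_inr.mpr ⟨rfl, rfl, hij, ⟨x, hx⟩, ⟨y, hy⟩⟩)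
          (.cons (gadgetB_adj_inr_inl.mpr hy) .nil))
    refine (wdist_le_walkWeight p).trans_eq ?_
    simp only [p, walkWeight_cons, walkWeight_nil, gadgetWeightB]
    push_cast
    ring

lemma gadgetB_wdist_le_wdist (hwsym : ∀ u v, w u v = w v u) (hcover : (⋃ i, Apart i) = A)
    (hB : ∀ i, B i = {x | x ∉ A ∧ ∃ a ∈ Apart i, G.Adj a x})
    (hcut : ∀ a ∈ A, ∀ b, b ∉ A → G.Adj a b → w a b = 1) {u v : V} (hu : u ∉ A) (hv : v ∉ A) :
    wdist (gadgetB G A B) (gadgetWeightB G w Apart) (.inl u) (.inl v) ≤ wdist G w u v := by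
  set dH : V → ℕ∞ := fun x => wdist (gadgetB G A B) (gadgetWeightB G w Apart) (.inl x) (.inl v)
  have hpart : ∀ x ∈ A, ∃ i, x ∈ Apart i := fun x hx => Set.mem_iUnion.mp (hcover ▸ hx)
  have hmemB : ∀ {i a x}, a ∈ Apart i → x ∉ A → G.Adj a x → x ∈ B i :=
    fun ha hx h => (hB _).symm ▸ ⟨hx, _, ha, h⟩
  let ψ : V → ℕ∞ := fun x =>
    if x ∈ A then ⨅ j, ⨅ a ∈ Apart j, ⨅ b ∈ B j, wdist G w x a + 1 + dH b else dH x
  have hψ : ∀ x y, G.Adj x y → ψ x ≤ w x y + ψ y := by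
    intro x y h
    by_cases hx : x ∈ A <;> by_cases hy : y ∈ A <;> simp only [ψ, hx, hy, if_true, if_false]
    · simp only [ENat.add_iInf]
      refine le_iInf fun j => le_iInf₂ fun a ha => le_iInf₂ fun b hb =>
        iInf_le_of_le j (iInf₂_le_of_le a ha (iInf₂_le_of_le b hb ?_))
      calc wdist G w x a + 1 + dH b ≤ (w x y + wdist G w y a) + 1 + dH b := by
            gcongr; exact wdist_le_add_wdist_of_adj h
        _ = _ := by ring
    · obtain ⟨i, hi⟩ := hpart x hx
      refine iInf_le_of_le i (iInf₂_le_of_le x hi (iInf₂_le_of_le y (hmemB hi hy h) ?_))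
      simp [wdist_self, hcut x hx y hy h]
    · obtain ⟨i, hi⟩ := hpart y hy
      have hxB : x ∈ B i := hmemB hi hx h.symm
      simp only [ENat.add_iInf]
      refine le_iInf fun j => le_iInf₂ fun a ha => le_iInf₂ fun b hb => ?_
      calc dH x ≤ wdist (gadgetB G A B) (gadgetWeightB G w Apart) (.inl x) (.inl b) + dH b :=
            wdist_triangle _ _ _
        _ ≤ (wSetDist G w (Apart i) (Apart j)).toNat + 2 + dH b := by
            gcongr; exact gadgetB_wdist_le hxB hb
        _ ≤ wdist G w y a + 2 + dH b := by
            gcongr; exact (ENat.natCast_toNat_le_self _).trans (wSetDist_le_wdist hi ha)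
        _ = w x y + (wdist G w y a + 1 + dH b) := by
            rw [hwsym, hcut y hy x hx h.symm]; push_cast; ring
    · exact wdist_le_add_wdist_of_adj (gadgetB_adj_inl_inl.mpr ⟨hx, hy, h⟩)
  simpa [ψ, hu, hv, dH, wdist_self] using le_wdist_add_of_forall_adj_le ψ hψ u v

lemma wdist_le_gadgetB_wdist (hG : G.Connected) (hne : ∀ i, (Apart i).Nonempty)
    (hjoin : ∀ i, IsUnitJoin G w (Apart i) (B i)) (u v : V) :
    wdist G w u v ≤ wdist (gadgetB G A B) (gadgetWeightB G w Apart) (.inl u) (.inl v) := by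
  set D : Fin k → Fin k → ℕ∞ := fun i j => wSetDist G w (Apart i) (Apart j)
  set m : Fin k → ℕ∞ := fun i => ⨅ b ∈ B i, wdist G w b v
  have hexit : ∀ i j, ∀ x ∈ B i, wdist G w x v ≤ D i j + 2 + m j := by
    intro i j x hx
    simp only [m, ENat.add_iInf]
    exact le_iInf₂ fun b hb => (wdist_triangle x b v).trans
      (by gcongr; exact wdist_le_wSetDist_add_two (hjoin i) (hjoin j) hx hb)
  let φ : V ⊕ Fin k × Fin k → ℕ∞
    | .inl x => wdist G w x v
    | .inr (i, j) => 1 + min (m i) (D i j + m j)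
  have hφ : ∀ s t, (gadgetB G A B).Adj s t → φ s ≤ gadgetWeightB G w Apart s t + φ t := by
    rintro (x | ⟨i, j⟩) (y | ⟨i', j'⟩) h
    · exact wdist_le_add_wdist_of_adj (gadgetB_adj_inl_inl.mp h).2.2
    · replace h := gadgetB_adj_inl_inr.mp h
      have hii : D i' i' = 0 := wSetDist_self (hne i')
      simp only [φ, gadgetWeightB, Nat.cast_one, ← add_assoc, one_add_one_eq_two,
        ← min_add_add_left]
      exact le_min (by simpa [hii] using hexit i' i' x h) ((hexit i' j' x h).trans_eq (by ring))
    · replace h := gadgetB_adj_inr_inl.mp h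
      simp only [φ, gadgetWeightB, Nat.cast_one]
      gcongr
      exact (min_le_left _ _).trans (iInf₂_le y h)
    · obtain ⟨hi', hj', -⟩ := gadgetB_adj_inr_inr.mp h
      subst i' j'
      simp only [φ, gadgetWeightB, ENat.natCast_toNat (wSetDist_ne_top hG (hne i) (hne j))]
      rcases min_choice (m j) (D j i + m i) with hmin | hmin <;> rw [hmin]
      · calc 1 + min (m i) (D i j + m j) ≤ 1 + (D i j + m j) := by gcongr; exact min_le_right _ _
          _ = D i j + (1 + m j) := by ring
      · calc 1 + min (m i) (D i j + m j) ≤ 1 + m i := by gcongr; exact min_le_left _ _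
          _ ≤ (D i j + D j i) + (1 + m i) := le_add_self
          _ = D i j + (1 + (D j i + m i)) := by ring
  simpa [φ, wdist_self] using le_wdist_add_of_forall_adj_le φ hφ (.inl u) (.inl v)

end Gadget

theorem gadgetB_preserves_distances_general (G : SimpleGraph V) (w : V → V → ℕ)
    (hG : G.Connected) (hwsym : ∀ u v, w u v = w v u)
    (A : Set V) (k : ℕ) (Apart : Fin k → Set V)
    (hcover : (⋃ i, Apart i) = A)
    (hne : ∀ i, (Apart i).Nonempty)
    (hmod : ∀ i, ∀ u ∈ Apart i, ∀ v ∈ Apart i, ∀ x ∉ A, (G.Adj u x ↔ G.Adj v x))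
    (B : Fin k → Set V) (hB : ∀ i, B i = {x | x ∉ A ∧ ∃ a ∈ Apart i, G.Adj a x})
    (hcut : ∀ a ∈ A, ∀ b, b ∉ A → G.Adj a b → w a b = 1) :
    ∀ u, u ∉ A → ∀ v, v ∉ A →
      wdist G w u v =
        wdist (gadgetB G A B) (gadgetWeightB G w Apart) (Sum.inl u) (Sum.inl v) := by
  intro u hu v hv
  have hjoin := isUnitJoin_of_unweighted_cut hwsym hcover hmod hB hcut
  exact le_antisymm (wdist_le_gadgetB_wdist hG hne hjoin u v)
    (gadgetB_wdist_le_wdist hwsym hcover hB hcut hu hv)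

/-- **Lemma 4.4 for `H_B`.** Let `G` be connected with edge weights `w`, and
`(A, V \ A)` an unweighted cut whose minimal partition is `A_1, …, A_k`, with
`B_i = N_G(A_i) \ A`.  Then the gadget graph `H_B` preserves the distances:
for all `u, v ∈ V \ A`, `d_G(u,v) = d_{H_B}(u,v)`. -/
theorem gadgetB_preserves_distances [Fintype V] (G : SimpleGraph V) (w : V → V → ℕ)
    (hG : G.Connected) (hwsym : ∀ u v, w u v = w v u)
    (A : Set V) (k : ℕ) (Apart : Fin k → Set V)
    (hcover : (⋃ i, Apart i) = A)
    (hne : ∀ i, (Apart i).Nonempty)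
    (hdisj : ∀ i j, i ≠ j → Disjoint (Apart i) (Apart j))
    (hmod : ∀ i, ∀ u ∈ Apart i, ∀ v ∈ Apart i, ∀ x ∉ A, (G.Adj u x ↔ G.Adj v x))
    (hmin : ∀ i j, i ≠ j →
      ∃ u ∈ Apart i, ∃ v ∈ Apart j, ∃ x ∉ A, ¬ (G.Adj u x ↔ G.Adj v x))
    (B : Fin k → Set V) (hB : ∀ i, B i = {x | x ∉ A ∧ ∃ a ∈ Apart i, G.Adj a x})
    (hcut : ∀ a ∈ A, ∀ b, b ∉ A → G.Adj a b → w a b = 1) :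
    ∀ u, u ∉ A → ∀ v, v ∉ A →
      wdist G w u v =
        wdist (gadgetB G A B) (gadgetWeightB G w Apart) (Sum.inl u) (Sum.inl v) :=
  gadgetB_preserves_distances_general G w hG hwsym A k Apart hcover hne hmod B hB hcut
end
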